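/- arXiv:0805.1373 — 3 statements merged into one kernel-verified Lean document; each statement's English description precedes it below -/
import Mathlib

section
/- Let h be a monoid morphism from the free monoid on the two-letter alphabet {0,1} to the free monoid on an alphabet Σ. If h(0)·h(1) ≠ h(1)·h(0), then h is injective on finite binary words: for all finite words a, b over {0,1}, a ≠ b implies h(a) ≠ h(b). -/
/-!
If `x * u = z * v` where `u` and `v` are products of copies of `x` and `z`, then `x` and `z`
commute. Indeed, by Levi's lemma one of `x`, `z` is a prefix of the other, say `z = x * w`;
cancelling `x` leaves a relation `x * u' = w * v'` with `u'`, `v'` products of copies of `x`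
and `w`, so by induction on `|x| + |z|` the words `x` and `w` commute, hence so do `x` and
`x * w`. Injectivity of `h` then follows letter by letter: equal first letters cancel, and
distinct first letters would give such a relation between `h 0` and `h 1`.
-/

open Submonoid

theorem Submonoid.eq_one_or_exists_mul_of_mem_closure {M : Type*} [Monoid M] {s : Set M} {u : M}
    (hu : u ∈ closure s) : u = 1 ∨ ∃ a ∈ s, ∃ u' ∈ closure s, u = a * u' := by
  induction hu using closure_induction_left with
  | one => exact .inl rfl
  | mul_left a ha u' hu' _ => exact .inr ⟨a, ha, u', hu', rfl⟩

namespace FreeMonoid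

variable {α β : Type*}

theorem mul_eq_mul_iff {a b c d : FreeMonoid α} :
    a * b = c * d ↔ (∃ e, c = a * e ∧ b = e * d) ∨ ∃ e, a = c * e ∧ d = e * b :=
  List.append_eq_append_iff

theorem exists_mul_eq_mul_of_mem_closure_mul {x w u v : FreeMonoid α}
    (hu : u ∈ closure {x, x * w}) (hv : v ∈ closure {x, x * w}) (huv : u = w * v) :
    w = 1 ∨ ∃ u' ∈ closure {x, w}, ∃ v' ∈ closure {x, w}, x * u' = w * v' := by
  have hle : closure {x, x * w} ≤ closure {x, w} :=
    closure_le.2 <| Set.pair_subset (subset_closure (by simp))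
      (mul_mem (subset_closure (by simp)) (subset_closure (by simp)))
  rcases eq_one_or_exists_mul_of_mem_closure hu with rfl | ⟨a, ha, u', hu', rfl⟩
  · exact .inl (eq_one_of_mul_right' huv.symm)
  right
  rcases ha with rfl | rfl
  · exact ⟨u', hle hu', v, hle hv, huv⟩
  · refine ⟨w * u', mul_mem (subset_closure (by simp)) (hle hu'), v, hle hv, ?_⟩
    rw [← mul_assoc, huv]

theorem commute_of_mul_eq_mul_of_mem_closure {x z u v : FreeMonoid α}
    (hu : u ∈ closure {x, z}) (hv : v ∈ closure {x, z}) (h : x * u = z * v) : Commute x z := by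
  induction hn : x.length + z.length using Nat.strong_induction_on generalizing x z u v with
  | _ n ih =>
  have of_eq_mul : ∀ {x w u v : FreeMonoid α}, x.length + (x * w).length = n →
      u ∈ closure {x, x * w} → v ∈ closure {x, x * w} → u = w * v → Commute x (x * w) := by
    intro x w u v hn hu hv huv
    rcases eq_or_ne x 1 with rfl | hx
    · exact Commute.one_left _
    rcases exists_mul_eq_mul_of_mem_closure_mul hu hv huv with rfl | ⟨u', hu', v', hv', h'⟩
    · rw [mul_one]
    · have hlt : x.length + w.length < n := by
        have := length_eq_zero.not.2 hx
        rw [length_mul] at hn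
        omega
      exact (Commute.refl x).mul_right (ih _ hlt hu' hv' h' rfl)
  rcases mul_eq_mul_iff.1 h with ⟨w, rfl, huw⟩ | ⟨w, rfl, hvw⟩
  · exact of_eq_mul hn hu hv huw
  · rw [Set.pair_comm] at hu hv
    exact (of_eq_mul (by omega) hv hu hvw).symm

theorem injective_of_map_of_ne_one_of_head_eq (f : FreeMonoid α →* FreeMonoid β)
    (hf : ∀ c, f (of c) ≠ 1) (hhead : ∀ c d u v, f (of c) * f u = f (of d) * f v → c = d) :
    Function.Injective f := by
  have hf' : ∀ c u, f (of c * u) ≠ 1 := fun c u h =>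
    hf c (eq_one_of_mul_right' (by rwa [map_mul] at h))
  intro a b hab
  induction a using FreeMonoid.inductionOn' generalizing b with
  | one =>
    cases b with
    | one => rfl
    | of_mul d v => exact (hf' d v (hab.symm.trans (map_one f))).elim
  | of_mul c u ih =>
    cases b with
    | one => exact (hf' c u (hab.trans (map_one f))).elim
    | of_mul d v =>
      rw [map_mul, map_mul] at hab
      obtain rfl := hhead c d u v hab
      rw [ih (mul_left_cancel hab)]

end FreeMonoid

theorem stmt_0 {S : Type*} (h : FreeMonoid Bool →* FreeMonoid S)
    (hcomm : h (FreeMonoid.of false) * h (FreeMonoid.of true) ≠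
      h (FreeMonoid.of true) * h (FreeMonoid.of false)) :
    ∀ a b : FreeMonoid Bool, a ≠ b → h a ≠ h b := by
  set x := h (FreeMonoid.of false)
  set z := h (FreeMonoid.of true)
  have hmem (u : FreeMonoid Bool) : h u ∈ closure {x, z} := by
    have hrange : Set.range (h ∘ FreeMonoid.of) = {x, z} := Bool.range_eq _
    rw [← hrange, ← FreeMonoid.mrange_lift, FreeMonoid.lift_restrict]
    exact ⟨u, rfl⟩
  refine fun a b => (FreeMonoid.injective_of_map_of_ne_one_of_head_eq h ?_ ?_).ne
  · intro c hc
    apply hcomm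
    cases c <;> simp [x, z, hc]
  · intro c d u v huv
    cases c <;> cases d
    · rfl
    · exact absurd (FreeMonoid.commute_of_mul_eq_mul_of_mem_closure (hmem u) (hmem v) huv) hcomm
    · refine absurd (FreeMonoid.commute_of_mul_eq_mul_of_mem_closure ?_ ?_ huv).symm hcomm
      all_goals rw [Set.pair_comm]; exact hmem _
    · rfl
end

section
/- Let h be a monoid morphism from the free monoid on the two-letter alphabet {0,1} to the free monoid on an alphabet Σ. Write x = h(0) and y = h(1). If |x| = 1, |y| = 2, and y ≠ x·x, then h is injective on finite binary words: for all finite words a, b over {0,1}, a ≠ b implies h(a) ≠ h(b). -/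
/-!
Write `h 0 = c` and `h 1 = d e` for letters `c, d, e`. A morphism of free monoids that erases no
letter is injective as soon as words starting with different letters have different images: one then
peels off equal first letters and cancels. If `h (0 u) = h (1 v)`, comparing first letters gives
`d = c` and `h u = e · h v`; but `h u` is nonempty and starts with `c` (both `h 0` and `h 1` do), so
`e = c` and `h 1 = c c`.
-/

open Function

namespace FreeMonoid

variable {α S : Type*}

theorem of_mul_eq_of_mul_iff {a b : α} {u v : FreeMonoid α} :
    of a * u = of b * v ↔ a = b ∧ u = v :=
  List.cons_eq_cons

theorem injective_of_map_of_mul_ne {h : FreeMonoid α →* FreeMonoid S}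
    (h_ne_one : ∀ a, h (of a) ≠ 1)
    (h_head : ∀ a b, a ≠ b → ∀ u v, h (of a * u) ≠ h (of b * v)) : Injective h := by
  intro u
  induction u using FreeMonoid.inductionOn' with
  | one =>
    intro v huv
    cases v with
    | one => rfl
    | of_mul b v => exact absurd huv.symm (by simp [h_ne_one])
  | of_mul a u ih =>
    intro v huv
    cases v with
    | one => simp [h_ne_one] at huv
    | of_mul b v =>
      obtain rfl : a = b := by_contra fun hab => h_head a b hab u v huv
      rw [ih (mul_left_cancel (by simpa only [map_mul] using huv))]

theorem map_of_false_mul_ne_map_of_true_mul {h : FreeMonoid Bool →* FreeMonoid S} {c d e : S}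
    (hx : h (of false) = of c) (hy : h (of true) = of d * of e) (hne : of d * of e ≠ of c * of c)
    (u v : FreeMonoid Bool) : h (of false * u) ≠ h (of true * v) := by
  intro huv
  rw [map_mul, map_mul, hx, hy, mul_assoc, of_mul_eq_of_mul_iff] at huv
  obtain ⟨rfl, hu⟩ := huv
  have hec : e ≠ c := by rintro rfl; exact hne rfl
  cases u with
  | one => exact absurd hu.symm (by simp)
  | of_mul b u =>
    cases b <;> simp only [map_mul, hx, hy, mul_assoc, of_mul_eq_of_mul_iff] at hu <;>
      exact hec hu.1.symm

end FreeMonoid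

theorem stmt_2 {S : Type*} (h : FreeMonoid Bool →* FreeMonoid S)
    (hx : (h (FreeMonoid.of false)).length = 1)
    (hy : (h (FreeMonoid.of true)).length = 2)
    (hne : h (FreeMonoid.of true) ≠ h (FreeMonoid.of false) * h (FreeMonoid.of false)) :
    ∀ a b : FreeMonoid Bool, a ≠ b → h a ≠ h b := by
  obtain ⟨c, hc⟩ := FreeMonoid.length_eq_one.mp hx
  obtain ⟨d, e, hde⟩ := FreeMonoid.length_eq_two.mp hy
  have head_ne := FreeMonoid.map_of_false_mul_ne_map_of_true_mul hc hde (hc ▸ hde ▸ hne)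
  have h_inj : Injective h := by
    refine FreeMonoid.injective_of_map_of_mul_ne (Bool.forall_bool.mpr ⟨by simp [hc], by simp [hde]⟩) ?_
    rintro (_ | _) (_ | _) hab u v
    exacts [absurd rfl hab, head_ne u v, (head_ne v u).symm, absurd rfl hab]
  exact fun a b hab => h_inj.ne hab
end

section
/- Let w : ℕ → {0,1} be an infinite binary word that is not ultimately periodic, and let h be a monoid morphism from finite binary words to finite words over an alphabet Σ. Suppose there exist finite words y and z over Σ with z nonempty such that for every n, the word h(w(0))·h(w(1))⋯h(w(n−1)) is a prefix of y·z^t for some natural number t (i.e., the image of w under h is ultimately periodic, equal to y·z^ω). Then h(0)·h(1) = h(1)·h(0), i.e., h(0) commutes with h(1). -/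
/-!
Write `u = h 0`, `v = h 1` and suppose `u v ≠ v u`. The image of `w` is the lasso word `y z^ω`,
so past `y` the suffix of it that starts where the image of `w m` starts depends only on the
length of the image of `w 0 ⋯ w (m-1)` modulo `|z|`. That suffix begins with `u` followed by
further blocks `u`, `v` when `w m = 0`, and with `v` followed by such blocks when `w m = 1`; a
single infinite word cannot do both over a stretch of length `|u| + |v|` unless `u v = v u`
(induct on `|u| + |v|`: if `|u| ≤ |v|` then `v = u v'`, and stripping `u` leads to the same
situation for the pair `u, v'`). Hence `w m` is a function of that residue, the residue itself
evolves deterministically, and `w` would be ultimately periodic.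
-/

section

variable {α β : Type*}

def IsPrefixOfSeq (l : List α) (T : ℕ → α) : Prop :=
  ∀ i (hi : i < l.length), l[i] = T i

theorem isPrefixOfSeq_append {a b : List α} {T : ℕ → α} :
    IsPrefixOfSeq (a ++ b) T ↔
      IsPrefixOfSeq a T ∧ IsPrefixOfSeq b (fun i => T (a.length + i)) := by
  constructor
  · intro h
    refine ⟨fun i hi => ?_, fun i hi => ?_⟩
    · rw [← h i (by simp; omega), List.getElem_append_left]
    · rw [List.getElem_append_right' a hi, h, add_comm]
  · rintro ⟨ha, hb⟩ i hi
    rw [List.getElem_append]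
    split_ifs with h
    · exact ha i h
    · simpa [Nat.add_sub_cancel' (not_lt.1 h)] using hb (i - a.length) (by simp at hi; omega)

theorem IsPrefixOfSeq.prefix_of_length_le {a b : List α} {T : ℕ → α}
    (ha : IsPrefixOfSeq a T) (hb : IsPrefixOfSeq b T) (h : a.length ≤ b.length) : a <+: b := by
  rw [List.prefix_iff_eq_take]
  refine List.ext_getElem (by simp; omega) fun i h1 h2 => ?_
  rw [ha i h1, List.getElem_take, hb]

theorem List.length_le_length_flatMap {f : α → List β} (hf : ∀ a, f a ≠ [])
    (l : List α) : l.length ≤ (l.flatMap f).length := by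
  induction l with
  | nil => simp
  | cons a l ih =>
    have := List.length_pos_iff.2 (hf a)
    simp only [List.flatMap_cons, List.length_append, List.length_cons]
    omega

theorem List.flatMap_eq_flatMap_flatMap_of_append_eq {f : Bool → List α} {vb : List α}
    (hv : f false ++ vb = f true) (Z : List Bool) :
    Z.flatMap f = (Z.flatMap fun d => if d then [false, true] else [false]).flatMap
      fun d => if d then vb else f false := by
  rw [List.flatMap_assoc]
  congr 1
  funext d
  cases d <;> simp [← hv]

def StartsWithImage (f : Bool → List α) (T : ℕ → α) (b : Bool) : Prop :=
  ∃ X : List Bool, IsPrefixOfSeq ((b :: X).flatMap f) T ∧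
    (f false).length + (f true).length ≤ ((b :: X).flatMap f).length

namespace StartsWithImage

variable {f : Bool → List α} {T : ℕ → α} {b : Bool}

theorem isPrefixOfSeq (h : StartsWithImage f T b) : IsPrefixOfSeq (f b) T := by
  obtain ⟨X, hX, -⟩ := h
  exact (isPrefixOfSeq_append.1 hX).1

theorem swap (h : StartsWithImage f T b) : StartsWithImage (f ∘ not) T (!b) := by
  obtain ⟨X, hX, hXlen⟩ := h
  have hflip : ((!b) :: X.map not).flatMap (f ∘ not) = (b :: X).flatMap f := by
    simp [List.flatMap_map]
  refine ⟨X.map not, by rwa [hflip], ?_⟩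
  rw [hflip]
  simp only [Function.comp_apply, Bool.not_false, Bool.not_true]
  omega

theorem shift {vb : List α} (hv : f false ++ vb = f true) (hu : f false ≠ [])
    (h : StartsWithImage f T b) :
    StartsWithImage (fun d => if d then vb else f false) (fun i => T ((f false).length + i)) b := by
  obtain ⟨X, hX, hXlen⟩ := h
  have hvlen : (f true).length = (f false).length + vb.length := by simp [← hv]
  have hupos := List.length_pos_iff.2 hu
  obtain ⟨X', hX'⟩ : ∃ X', (b :: X).flatMap (fun d => if d then [false, true] else [false]) =
      false :: b :: X' := by
    cases b
    · obtain ⟨d, X₀, rfl⟩ := List.exists_cons_of_ne_nil (show X ≠ [] by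
        rintro rfl
        simp only [List.flatMap_cons, List.flatMap_nil, List.append_nil] at hXlen
        omega)
      cases d <;> exact ⟨_, rfl⟩
    · exact ⟨_, rfl⟩
  rw [List.flatMap_eq_flatMap_flatMap_of_append_eq hv, hX', List.flatMap_cons] at hX hXlen
  refine ⟨X', (isPrefixOfSeq_append.1 hX).2, ?_⟩
  simp only [List.length_append, Bool.false_eq_true, if_false, if_true] at hXlen ⊢
  omega

end StartsWithImage

theorem append_comm_of_startsWithImage {f : Bool → List α} {T : ℕ → α}
    (h₀ : StartsWithImage f T false) (h₁ : StartsWithImage f T true) :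
    f false ++ f true = f true ++ f false := by
  induction hn : (f false).length + (f true).length using Nat.strong_induction_on
    generalizing f T with
  | _ n ih =>
  wlog hle : (f false).length ≤ (f true).length generalizing f
  · exact (this h₁.swap h₀.swap (by simp; omega) (by simp; omega)).symm
  by_cases hu : f false = []
  · simp [hu]
  obtain ⟨vb, hv⟩ := h₀.isPrefixOfSeq.prefix_of_length_le h₁.isPrefixOfSeq hle
  have hlt : (f false).length + vb.length < n := by
    have := List.length_pos_iff.2 hu
    rw [← hn, ← hv, List.length_append]
    omega
  have hvb : f false ++ vb = vb ++ f false := ih _ hlt (h₀.shift hv hu) (h₁.shift hv hu) rfl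
  rw [← hv, List.append_assoc, hvb]

theorem append_comm_of_startsWithImage_of_ne {f : Bool → List α} {T : ℕ → α} {b c : Bool}
    (hb : StartsWithImage f T b) (hc : StartsWithImage f T c) (hbc : b ≠ c) :
    f false ++ f true = f true ++ f false := by
  cases b <;> cases c
  all_goals first
    | exact absurd rfl hbc
    | exact append_comm_of_startsWithImage hb hc
    | exact append_comm_of_startsWithImage hc hb

section Lasso

variable (y z : List α) (hz : z ≠ [])

-- The infinite word `y z^ω`.
def lassoWord (k : ℕ) : α :=
  if hk : k < y.length then y[k]
  else z[(k - y.length) % z.length]'(Nat.mod_lt _ (List.length_pos_iff.2 hz))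

theorem isPrefixOfSeq_flatten_replicate (t : ℕ) :
    IsPrefixOfSeq (List.replicate t z).flatten
      (fun i => z[i % z.length]'(Nat.mod_lt _ (List.length_pos_iff.2 hz))) := by
  induction t with
  | zero => simp [IsPrefixOfSeq]
  | succ t ih =>
    rw [List.replicate_succ, List.flatten_cons, isPrefixOfSeq_append]
    refine ⟨fun i hi => by simp [Nat.mod_eq_of_lt hi], ?_⟩
    simpa only [Nat.add_mod_left] using ih

theorem isPrefixOfSeq_lassoWord (t : ℕ) :
    IsPrefixOfSeq (y ++ (List.replicate t z).flatten) (lassoWord y z hz) := by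
  refine isPrefixOfSeq_append.2 ⟨fun i hi => by simp [lassoWord, hi], ?_⟩
  simpa [lassoWord] using isPrefixOfSeq_flatten_replicate z hz t

theorem lassoWord_add_of_modEq {a b : ℕ} (ha : y.length ≤ a) (hb : y.length ≤ b)
    (hab : a ≡ b [MOD z.length]) (i : ℕ) :
    lassoWord y z hz (a + i) = lassoWord y z hz (b + i) := by
  have hmod : a - y.length + i ≡ b - y.length + i [MOD z.length] :=
    (Nat.ModEq.add_right_cancel' y.length
      (by rwa [Nat.sub_add_cancel ha, Nat.sub_add_cancel hb])).add_right i
  simp only [lassoWord, dif_neg (show ¬ a + i < y.length by omega),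
    dif_neg (show ¬ b + i < y.length by omega)]
  congr 1
  rw [show a + i - y.length = a - y.length + i by omega,
    show b + i - y.length = b - y.length + i by omega]
  exact hmod

end Lasso

section Image

variable (f : α → List β) (w : ℕ → α)

def imagePrefix (n : ℕ) : List β := ((List.range n).map w).flatMap f

theorem imagePrefix_add (m M : ℕ) :
    imagePrefix f w (m + M) = imagePrefix f w m ++ ((List.range' m M).map w).flatMap f := by
  simp only [imagePrefix, List.range_eq_range', ← List.range'_append_1, List.map_append,
    List.flatMap_append, zero_add]

theorem length_imagePrefix_succ (m : ℕ) :
    (imagePrefix f w (m + 1)).length = (imagePrefix f w m).length + (f (w m)).length := by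
  simp [imagePrefix_add]

variable {f}

theorem le_length_imagePrefix (hf : ∀ a, f a ≠ []) (n : ℕ) :
    n ≤ (imagePrefix f w n).length := by
  have := List.length_le_length_flatMap hf ((List.range n).map w)
  rwa [List.length_map, List.length_range] at this

end Image

theorem startsWithImage_of_isPrefixOfSeq_imagePrefix {f : Bool → List β} {w : ℕ → Bool}
    {U : ℕ → β} (hf : ∀ b, f b ≠ []) (hU : ∀ n, IsPrefixOfSeq (imagePrefix f w n) U)
    (m : ℕ) :
    StartsWithImage f (fun i => U ((imagePrefix f w m).length + i)) (w m) := by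
  set K := (f false).length + (f true).length
  have hseg := hU (m + (K + 1))
  rw [imagePrefix_add, isPrefixOfSeq_append, List.range'_succ, List.map_cons] at hseg
  refine ⟨_, hseg.2, ?_⟩
  have := List.length_le_length_flatMap hf (w m :: (List.range' (m + 1) K).map w)
  simp only [List.length_cons, List.length_map, List.length_range'] at this
  omega

theorem exists_eventually_periodic_of_finite_state [Finite β] (w : ℕ → α)
    (s : ℕ → β) (N : ℕ)
    (h : ∀ m ≥ N, ∀ n ≥ N, s m = s n → w m = w n ∧ s (m + 1) = s (n + 1)) :
    ∃ M p : ℕ, 0 < p ∧ ∀ n ≥ M, w (n + p) = w n := by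
  obtain ⟨a, b, hab, hs⟩ := Finite.exists_ne_map_eq_of_infinite fun k => s (N + k)
  wlog hlt : a < b generalizing a b
  · exact this b a hab.symm hs.symm (by omega)
  have hrun : ∀ k, s (N + a + k) = s (N + b + k) := by
    intro k
    induction k with
    | zero => exact hs
    | succ k ih => exact (h _ (by omega) _ (by omega) ih).2
  refine ⟨N + a, b - a, by omega, fun n hn => ?_⟩
  obtain ⟨k, rfl⟩ := Nat.exists_eq_add_of_le hn
  rw [show N + a + k + (b - a) = N + b + k by omega]
  exact ((h _ (by omega) _ (by omega) (hrun k)).1).symm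

theorem append_comm_of_imagePrefix_lassoWord {f : Bool → List β} {w : ℕ → Bool}
    (hw : ¬ ∃ N : ℕ, ∃ p : ℕ, 0 < p ∧ ∀ n ≥ N, w (n + p) = w n)
    {y z : List β} (hz : z ≠ [])
    (hU : ∀ n, IsPrefixOfSeq (imagePrefix f w n) (lassoWord y z hz)) :
    f false ++ f true = f true ++ f false := by
  by_contra hne
  have hf : ∀ b, f b ≠ [] := by
    intro b hb
    cases b <;> simp [hb] at hne
  have : NeZero z.length := ⟨by simpa using hz⟩
  refine hw (exists_eventually_periodic_of_finite_state w
    (fun n => ((imagePrefix f w n).length : ZMod z.length)) y.length ?_)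
  intro m hm n hn hs
  have hwmn : w m = w n := by
    by_contra hwmn
    have hT := funext (lassoWord_add_of_modEq y z hz
      (hn.trans (le_length_imagePrefix w hf n)) (hm.trans (le_length_imagePrefix w hf m))
      ((ZMod.natCast_eq_natCast_iff _ _ _).1 hs.symm))
    have h₀ := startsWithImage_of_isPrefixOfSeq_imagePrefix hf hU m
    have h₁ := startsWithImage_of_isPrefixOfSeq_imagePrefix hf hU n
    rw [hT] at h₁
    exact hne (append_comm_of_startsWithImage_of_ne h₀ h₁ hwmn)
  refine ⟨hwmn, ?_⟩
  simp only [length_imagePrefix_succ, Nat.cast_add, hs, hwmn]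

theorem List.ofFn_eq_map_range (g : ℕ → α) (n : ℕ) :
    List.ofFn (fun i : Fin n => g i) = (List.range n).map g :=
  List.ext_getElem (by simp) fun _ _ _ => by simp

theorem FreeMonoid.toList_pow (x : FreeMonoid α) (t : ℕ) :
    (x ^ t).toList = (List.replicate t x.toList).flatten := by
  induction t with
  | zero => rfl
  | succ t ih => rw [pow_succ', FreeMonoid.toList_mul, ih, List.replicate_succ, List.flatten_cons]

theorem FreeMonoid.toList_apply_ofList (h : FreeMonoid α →* FreeMonoid β)
    (l : List α) :
    (h (FreeMonoid.ofList l)).toList = l.flatMap fun a => (h (FreeMonoid.of a)).toList := by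
  induction l with
  | nil => simp
  | cons a l ih =>
    rw [FreeMonoid.ofList_cons, map_mul, FreeMonoid.toList_mul, ih, List.flatMap_cons]

end

theorem stmt_8 {S : Type*} (w : ℕ → Bool)
    (hw : ¬ ∃ N : ℕ, ∃ p : ℕ, 0 < p ∧ ∀ n ≥ N, w (n + p) = w n)
    (h : FreeMonoid Bool →* FreeMonoid S)
    (y z : FreeMonoid S) (hz : z ≠ 1)
    (hpref : ∀ n : ℕ, ∃ t : ℕ, ∃ s : FreeMonoid S,
      h (FreeMonoid.ofList (List.ofFn fun i : Fin n => w i)) * s = y * z ^ t) :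
    h (FreeMonoid.of false) * h (FreeMonoid.of true) =
      h (FreeMonoid.of true) * h (FreeMonoid.of false) := by
  have hz' : z.toList ≠ [] := fun hz0 => hz (FreeMonoid.toList.injective hz0)
  refine FreeMonoid.toList.injective <| append_comm_of_imagePrefix_lassoWord
    (f := fun b => (h (FreeMonoid.of b)).toList) (y := y.toList) hw hz' fun n => ?_
  obtain ⟨t, s, hs⟩ := hpref n
  have := isPrefixOfSeq_lassoWord y.toList z.toList hz' t
  rw [← FreeMonoid.toList_pow, ← FreeMonoid.toList_mul, ← hs, FreeMonoid.toList_mul,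
    FreeMonoid.toList_apply_ofList, List.ofFn_eq_map_range] at this
  exact (isPrefixOfSeq_append.1 this).1
end
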